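/- Let S ⊆ ℝ be measurable with α(0;S) = a ∈ (0,1), and let z ~ N(0,1,S). Then there exists q ≥ 0 with q ≤ 2·log(2/a) such that for all t ≥ 0, P(z² − q ≥ t) ≤ exp(−t/2); that is, z² − q has subexponential tails dominated by the exponential distribution with rate 1/2. -/
import Mathlib


open MeasureTheory ProbabilityTheory Real
open scoped RealInnerProductSpace ENNReal

/-- The survival probability `α(μ; S) = N(μ,1)(S)`. -/
noncomputable def survival (μ : ℝ) (S : Set ℝ) : ℝ :=
  (gaussianReal μ 1 S).toReal

/-- The truncated Gaussian `N(μ,1,S)`, i.e. `N(μ,1)` conditioned on `S`. -/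
noncomputable def truncGaussian (μ : ℝ) (S : Set ℝ) : Measure ℝ :=
  (gaussianReal μ 1)[|S]

lemma gauss_tail_Ici (x : ℝ) (hx : 0 ≤ x) :
    gaussianReal 0 1 (Set.Ici x) ≤ ENNReal.ofReal (Real.exp (-x ^ 2 / 2)) := by
  rw [gaussianReal_apply 0 one_ne_zero]
  have hmp : MeasurePreserving (· + x) (volume : Measure ℝ) volume :=
    measurePreserving_add_right volume x
  have hemb : MeasurableEmbedding (· + x : ℝ → ℝ) :=
    (Homeomorph.addRight x).measurableEmbedding
  have hpre : (· + x : ℝ → ℝ) ⁻¹' Set.Ici x = Set.Ici 0 := by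
    ext y; simp [Set.mem_Ici]
  have hchg : ∫⁻ z in Set.Ici x, gaussianPDF 0 1 z
      = ∫⁻ y in Set.Ici 0, gaussianPDF 0 1 (y + x) := by
    rw [← hpre, hmp.setLIntegral_comp_preimage_emb hemb]
  rw [hchg]
  have hbound : ∫⁻ y in Set.Ici 0, gaussianPDF 0 1 (y + x)
      ≤ ∫⁻ y in Set.Ici 0, ENNReal.ofReal (Real.exp (-x ^ 2 / 2)) * gaussianPDF 0 1 y := by
    refine setLIntegral_mono ((measurable_gaussianPDF 0 1).const_mul _) fun y hy => ?_
    simp only [gaussianPDF, ← ENNReal.ofReal_mul (Real.exp_nonneg _)]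
    refine ENNReal.ofReal_le_ofReal ?_
    simp only [gaussianPDFReal, sub_zero, NNReal.coe_one, mul_one]
    rw [mul_comm (Real.exp (-x ^ 2 / 2)), mul_assoc]
    refine mul_le_mul_of_nonneg_left ?_ (by positivity)
    rw [← Real.exp_add]
    refine Real.exp_le_exp.mpr ?_
    have hy0 : 0 ≤ y := hy
    nlinarith [mul_nonneg hy0 hx]
  refine hbound.trans ?_
  rw [lintegral_const_mul _ (measurable_gaussianPDF 0 1)]
  have h1 : ∫⁻ y in Set.Ici 0, gaussianPDF 0 1 y ≤ 1 := by
    calc ∫⁻ y in Set.Ici 0, gaussianPDF 0 1 y ≤ ∫⁻ y, gaussianPDF 0 1 y :=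
          setLIntegral_le_lintegral _ _
      _ = 1 := lintegral_gaussianPDF_eq_one 0 one_ne_zero
  calc ENNReal.ofReal (Real.exp (-x ^ 2 / 2)) * ∫⁻ y in Set.Ici 0, gaussianPDF 0 1 y
      ≤ ENNReal.ofReal (Real.exp (-x ^ 2 / 2)) * 1 := mul_le_mul_right h1 _
    _ = _ := mul_one _

lemma gauss_tail_Iic (x : ℝ) (hx : 0 ≤ x) :
    gaussianReal 0 1 (Set.Iic (-x)) ≤ ENNReal.ofReal (Real.exp (-x ^ 2 / 2)) := by
  have hmap : (gaussianReal 0 1).map (fun z : ℝ => (-1) * z) = gaussianReal 0 1 := by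
    rw [gaussianReal_map_const_mul (-1)]
    norm_num
  have hneg : Set.Iic (-x) = (fun z : ℝ => (-1) * z) ⁻¹' Set.Ici x := by
    ext z; simp only [Set.mem_Iic, Set.mem_preimage, Set.mem_Ici]; constructor <;> intro h <;> linarith
  rw [hneg, ← Measure.map_apply (by fun_prop) measurableSet_Ici, hmap]
  exact gauss_tail_Ici x hx

theorem stmt4 (S : Set ℝ) (hS : MeasurableSet S) (a : ℝ) (ha0 : 0 < a) (ha1 : a < 1)
    (hmass : survival 0 S = a) :
    ∃ q : ℝ, 0 ≤ q ∧ q ≤ 2 * Real.log (2 / a) ∧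
      ∀ t : ℝ, 0 ≤ t →
        truncGaussian 0 S {z : ℝ | t ≤ z ^ 2 - q} ≤ ENNReal.ofReal (Real.exp (-t / 2)) := by
  set q : ℝ := 2 * Real.log (2 / a) with hq
  have h2a : 1 < 2 / a := by
    rw [lt_div_iff₀ ha0]; linarith
  have hq0 : 0 ≤ q := by
    have := Real.log_nonneg h2a.le
    positivity
  refine ⟨q, hq0, le_refl _, fun t ht => ?_⟩
  have hμS : gaussianReal 0 1 S = ENNReal.ofReal a := by
    have hfin : gaussianReal 0 1 S ≠ ∞ := measure_ne_top _ _
    rw [← hmass, survival, ENNReal.ofReal_toReal hfin]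
  set s : ℝ := Real.sqrt (q + t) with hs
  have hqt : 0 ≤ q + t := by linarith
  have hs2 : s ^ 2 = q + t := Real.sq_sqrt hqt
  have hsub : {z : ℝ | t ≤ z ^ 2 - q} ⊆ Set.Iic (-s) ∪ Set.Ici s := by
    intro z hz
    simp only [Set.mem_setOf_eq] at hz
    have hz2 : q + t ≤ z ^ 2 := by linarith
    have habs : s ≤ |z| := by
      rw [hs, ← Real.sqrt_sq_eq_abs]
      exact Real.sqrt_le_sqrt hz2
    rcases le_or_gt 0 z with hz0 | hz0
    · right; rw [Set.mem_Ici]; rwa [abs_of_nonneg hz0] at habs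
    · left; rw [Set.mem_Iic]; rw [abs_of_neg hz0] at habs; linarith
  have htail : gaussianReal 0 1 {z : ℝ | t ≤ z ^ 2 - q}
      ≤ ENNReal.ofReal (2 * Real.exp (-(q + t) / 2)) := by
    calc gaussianReal 0 1 {z : ℝ | t ≤ z ^ 2 - q}
        ≤ gaussianReal 0 1 (Set.Iic (-s) ∪ Set.Ici s) := measure_mono hsub
      _ ≤ gaussianReal 0 1 (Set.Iic (-s)) + gaussianReal 0 1 (Set.Ici s) :=
          measure_union_le _ _
      _ ≤ ENNReal.ofReal (Real.exp (-s ^ 2 / 2)) + ENNReal.ofReal (Real.exp (-s ^ 2 / 2)) := by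
          gcongr
          · exact gauss_tail_Iic s (Real.sqrt_nonneg _)
          · exact gauss_tail_Ici s (Real.sqrt_nonneg _)
      _ = ENNReal.ofReal (2 * Real.exp (-(q + t) / 2)) := by
          rw [hs2, ← ENNReal.ofReal_add (Real.exp_nonneg _) (Real.exp_nonneg _)]
          ring_nf
  have hcond : truncGaussian 0 S {z : ℝ | t ≤ z ^ 2 - q}
      = (gaussianReal 0 1 S)⁻¹ * gaussianReal 0 1 (S ∩ {z : ℝ | t ≤ z ^ 2 - q}) :=
    cond_apply hS _ _
  rw [hcond, hμS]
  have hinter : gaussianReal 0 1 (S ∩ {z : ℝ | t ≤ z ^ 2 - q})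
      ≤ ENNReal.ofReal (2 * Real.exp (-(q + t) / 2)) :=
    (measure_mono Set.inter_subset_right).trans htail
  calc (ENNReal.ofReal a)⁻¹ * gaussianReal 0 1 (S ∩ {z : ℝ | t ≤ z ^ 2 - q})
      ≤ (ENNReal.ofReal a)⁻¹ * ENNReal.ofReal (2 * Real.exp (-(q + t) / 2)) :=
        mul_le_mul_right hinter _
    _ = ENNReal.ofReal (a⁻¹ * (2 * Real.exp (-(q + t) / 2))) := by
        rw [← ENNReal.ofReal_inv_of_pos ha0, ← ENNReal.ofReal_mul (by positivity)]
    _ = ENNReal.ofReal (Real.exp (-t / 2)) := by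
        congr 1
        have hexpq : Real.exp (-q / 2) = a / 2 := by
          rw [hq]
          rw [show -(2 * Real.log (2 / a)) / 2 = -Real.log (2 / a) by ring]
          rw [Real.exp_neg, Real.exp_log (by positivity)]
          field_simp
        have : Real.exp (-(q + t) / 2) = Real.exp (-q / 2) * Real.exp (-t / 2) := by
          rw [← Real.exp_add]; ring_nf
        rw [this, hexpq]
        field_simp
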